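/- arXiv:2101.11288 — 7 statements merged into one kernel-verified Lean document; each statement's English description precedes it below -/
import Mathlib

section
/- Let d ≥ 1. If A is a d×d factorisable bistochastic matrix and B is a d×d bracelet bistochastic matrix, then both products AB and BA are bracelet bistochastic matrices. -/
/-- A `d × d` real matrix is bistochastic (doubly stochastic) if all its entries are
non-negative and each row and each column sums to `1`. -/
def Bistochastic {d : ℕ} (B : Matrix (Fin d) (Fin d) ℝ) : Prop :=
  (∀ j k, 0 ≤ B j k) ∧ (∀ j, ∑ k, B j k = 1) ∧ (∀ k, ∑ j, B j k = 1)

/-- A bistochastic matrix is bracelet if for every pair of columns `k, l` and every `j₀`,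
`2 √(B j₀ k * B j₀ l) ≤ ∑ j, √(B j k * B j l)` (equivalently, twice the maximum is at most
the sum), and the analogous condition holds for every pair of rows. -/
def Bracelet {d : ℕ} (B : Matrix (Fin d) (Fin d) ℝ) : Prop :=
  Bistochastic B ∧
  (∀ k l j₀ : Fin d, 2 * Real.sqrt (B j₀ k * B j₀ l) ≤ ∑ j, Real.sqrt (B j k * B j l)) ∧
  (∀ j k l₀ : Fin d, 2 * Real.sqrt (B j l₀ * B k l₀) ≤ ∑ l, Real.sqrt (B j l * B k l))

/-- A `d × d` bistochastic matrix `E` is elementary if `E k k = 1` for at least `d - 2`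
indices `k`. -/
def Elementary {d : ℕ} (E : Matrix (Fin d) (Fin d) ℝ) : Prop :=
  Bistochastic E ∧ ∃ S : Finset (Fin d), d - 2 ≤ S.card ∧ ∀ k ∈ S, E k k = 1

/-- The set `F_d` of factorisable bistochastic matrices: the topological closure of the set
of finite products of elementary bistochastic matrices (the identity being the empty
product). -/
def Factorisable {d : ℕ} (B : Matrix (Fin d) (Fin d) ℝ) : Prop :=
  B ∈ closure { M : Matrix (Fin d) (Fin d) ℝ |
    ∃ L : List (Matrix (Fin d) (Fin d) ℝ), (∀ E ∈ L, Elementary E) ∧ M = L.prod }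

/-!
Call `w` polygonal if `2 * w i ≤ ∑ j, w j` for all `i`. A matrix is bracelet iff it is doubly
stochastic and `l ↦ √(u l * v l)` is polygonal whenever `u, v` are two of its rows or two of its
columns.

By Minkowski's inequality in `ℓ²`, this is preserved when `v` is replaced by a nonnegative
combination of vectors that each satisfy it; hence the rows of `E * B` stay polygonal for every
nonnegative `E`. An elementary bistochastic `E` is `t • 1 + (1 - t) • P` with `P` the matrix of a
transposition `(a b)`, so the columns of `E * B` arise from those of `B` by mixing the coordinates
`a` and `b`. For two columns `c, c'` let `f = √(c * c')` and let `g` be the same vector after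
mixing: Cauchy–Schwarz gives `f a + f b ≤ g a + g b`, and `g a ^ 2 - g b ^ 2 =
(2t - 1) (f a ^ 2 - f b ^ 2)` gives `|g a - g b| ≤ |f a - f b|`, which together keep the polygon
inequalities. Transposition handles `B * E`, induction products of elementary matrices, and the
bracelet condition is closed, so it passes to the closure.
-/

open Finset Matrix

lemma abs_sub_le_abs_sub_of_sq {x y u v : ℝ} (hx : 0 ≤ x) (hy : 0 ≤ y) (hu : 0 ≤ u) (hv : 0 ≤ v)
    (hsq : |x ^ 2 - y ^ 2| ≤ |u ^ 2 - v ^ 2|) (hsum : u + v ≤ x + y) : |x - y| ≤ |u - v| := by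
  rcases (add_nonneg hx hy).eq_or_lt with h0 | h0
  · rw [show x = 0 by linarith, show y = 0 by linarith]; simp
  refine le_of_mul_le_mul_right ?_ h0
  calc |x - y| * (x + y) = |x ^ 2 - y ^ 2| := by
        rw [sq_sub_sq, abs_mul, abs_of_pos h0, mul_comm]
    _ ≤ |u ^ 2 - v ^ 2| := hsq
    _ = |u - v| * (u + v) := by
        rw [sq_sub_sq, abs_mul, abs_of_nonneg (add_nonneg hu hv), mul_comm]
    _ ≤ |u - v| * (x + y) := by gcongr

lemma mul_sqrt_mul_add_mul_sqrt_mul_le {t s p q p' q' : ℝ} (ht : 0 ≤ t) (hs : 0 ≤ s)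
    (hp : 0 ≤ p) (hq : 0 ≤ q) (hp' : 0 ≤ p') (hq' : 0 ≤ q') :
    t * √(p * p') + s * √(q * q') ≤ √((t * p + s * q) * (t * p' + s * q')) := by
  have := Real.sum_sqrt_mul_sqrt_le univ (f := ![t * p, s * q]) (g := ![t * p', s * q'])
    (fun i => by fin_cases i <;> simp <;> positivity)
    (fun i => by fin_cases i <;> simp <;> positivity)
  simp only [Fin.sum_univ_two, Matrix.cons_val_zero, Matrix.cons_val_one] at this
  rwa [← Real.sqrt_mul (by positivity), ← Real.sqrt_mul (by positivity),
    ← Real.sqrt_mul (by positivity), mul_mul_mul_comm, mul_mul_mul_comm s,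
    Real.sqrt_mul (mul_self_nonneg t), Real.sqrt_mul (mul_self_nonneg s), Real.sqrt_mul_self ht,
    Real.sqrt_mul_self hs] at this

variable {ι : Type*} [Fintype ι]

-- `w` lists the side lengths of a closed polygon: no side exceeds the sum of the others.
def IsPolygonal (w : ι → ℝ) : Prop := ∀ i, 2 * w i ≤ ∑ j, w j

lemma IsPolygonal.sqrt_mul_comm {u v : ι → ℝ} (h : IsPolygonal fun i => √(u i * v i)) :
    IsPolygonal fun i => √(v i * u i) := by
  simpa only [mul_comm (v _)] using h

lemma IsPolygonal.sqrt_mul_sum {κ : Type*} [Fintype κ] {u : ι → ℝ} {v : κ → ι → ℝ} {c : κ → ℝ}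
    (hu : ∀ i, 0 ≤ u i) (hv : ∀ m i, 0 ≤ v m i) (hc : ∀ m, 0 ≤ c m)
    (h : ∀ m, IsPolygonal fun i => √(u i * v m i)) :
    IsPolygonal fun i => √(u i * ∑ m, c m * v m i) := by
  let F : ι → EuclideanSpace ℝ κ := fun i => WithLp.toLp 2 fun m => √(c m) * √(u i * v m i)
  have hF : ∀ i, ‖F i‖ = √(u i * ∑ m, c m * v m i) := by
    intro i
    rw [EuclideanSpace.norm_eq, mul_sum]
    congr 1
    refine sum_congr rfl fun m _ => ?_
    simp only [F, Real.norm_eq_abs, sq_abs, mul_pow, Real.sq_sqrt (hc m),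
      Real.sq_sqrt (mul_nonneg (hu i) (hv m i))]
    ring
  intro i₀
  simp only [← hF]
  calc 2 * ‖F i₀‖ = ‖(2 : ℝ) • F i₀‖ := by rw [norm_smul, Real.norm_two]
    _ ≤ ‖∑ i, F i‖ := by
      simp only [EuclideanSpace.norm_eq]
      gcongr with m
      simp only [Real.norm_eq_abs, PiLp.smul_apply, smul_eq_mul, WithLp.ofLp_sum, Finset.sum_apply, F,
        ← mul_sum]
      rw [mul_left_comm, abs_of_nonneg (by positivity), abs_of_nonneg (by positivity)]
      exact mul_le_mul_of_nonneg_left (h m i₀) (Real.sqrt_nonneg _)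
    _ ≤ ∑ i, ‖F i‖ := norm_sum_le _ _

lemma IsPolygonal.of_eq_off_pair [DecidableEq ι] {f g : ι → ℝ} {a b : ι} (hab : a ≠ b)
    (hf : IsPolygonal f) (hg : ∀ i, i ≠ a → i ≠ b → g i = f i)
    (hsum : f a + f b ≤ g a + g b) (hdiff : |g a - g b| ≤ |f a - f b|) : IsPolygonal g := by
  have hsplit : ∀ w : ι → ℝ, ∑ i, w i = w a + w b + ∑ i ∈ {a, b}ᶜ, w i := fun w => by
    rw [← sum_add_sum_compl {a, b}, sum_pair hab]
  have hrest : ∑ i ∈ {a, b}ᶜ, g i = ∑ i ∈ {a, b}ᶜ, f i := sum_congr rfl fun i hi => by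
    simp only [mem_compl, mem_insert, mem_singleton, not_or] at hi
    exact hg i hi.1 hi.2
  have hfa := hf a
  have hfb := hf b
  rw [hsplit] at hfa hfb
  have hgab := abs_sub_le_iff.1 <| hdiff.trans <| abs_sub_le_iff.2 ⟨by linarith, by linarith⟩
  intro i
  have hfi := hf i
  rw [hsplit] at hfi ⊢
  rw [hrest]
  by_cases hia : i = a
  · subst hia; linarith
  by_cases hib : i = b
  · subst hib; linarith
  rw [hg i hia hib]
  linarith

lemma IsPolygonal.sqrt_mul_swap_mix [DecidableEq ι] {c c' : ι → ℝ} (hc : ∀ i, 0 ≤ c i)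
    (hc' : ∀ i, 0 ≤ c' i) (h : IsPolygonal fun i => √(c i * c' i)) {a b : ι} (hab : a ≠ b)
    {t : ℝ} (ht₀ : 0 ≤ t) (ht₁ : t ≤ 1) :
    IsPolygonal fun i => √((t * c i + (1 - t) * c (Equiv.swap a b i)) *
      (t * c' i + (1 - t) * c' (Equiv.swap a b i))) := by
  have hs₀ : 0 ≤ 1 - t := by linarith
  have hga := mul_sqrt_mul_add_mul_sqrt_mul_le ht₀ hs₀ (hc a) (hc b) (hc' a) (hc' b)
  have hgb := mul_sqrt_mul_add_mul_sqrt_mul_le ht₀ hs₀ (hc b) (hc a) (hc' b) (hc' a)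
  refine h.of_eq_off_pair hab (fun i hia hib => ?_) ?_ ?_
  · simp only [Equiv.swap_apply_of_ne_of_ne hia hib]; ring_nf
  · simp only [Equiv.swap_apply_left, Equiv.swap_apply_right]
    linear_combination hga + hgb
  · simp only [Equiv.swap_apply_left, Equiv.swap_apply_right]
    refine abs_sub_le_abs_sub_of_sq (Real.sqrt_nonneg _) (Real.sqrt_nonneg _) (Real.sqrt_nonneg _)
      (Real.sqrt_nonneg _) ?_ (by linear_combination hga + hgb)
    have hmix : ∀ x y : ℝ, 0 ≤ x → 0 ≤ y → 0 ≤ t * x + (1 - t) * y := fun x y hx hy => by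
      positivity
    rw [Real.sq_sqrt (mul_nonneg (hmix _ _ (hc a) (hc b)) (hmix _ _ (hc' a) (hc' b))),
      Real.sq_sqrt (mul_nonneg (hmix _ _ (hc b) (hc a)) (hmix _ _ (hc' b) (hc' a))),
      Real.sq_sqrt (mul_nonneg (hc a) (hc' a)), Real.sq_sqrt (mul_nonneg (hc b) (hc' b))]
    calc _ = |2 * t - 1| * |c a * c' a - c b * c' b| := by rw [← abs_mul]; ring_nf
      _ ≤ 1 * |c a * c' a - c b * c' b| := by gcongr; exact abs_le.2 ⟨by linarith, by linarith⟩
      _ = _ := one_mul _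

section Matrix

variable {m n : Type*} [Fintype m] [Fintype n]

def RowsPolygonal (B : Matrix m n ℝ) : Prop := ∀ j k, IsPolygonal fun l => √(B j l * B k l)

lemma RowsPolygonal.mul {p : Type*} {A : Matrix p m ℝ} {B : Matrix m n ℝ}
    (hA : ∀ i j, 0 ≤ A i j) (hB : ∀ i j, 0 ≤ B i j) (h : RowsPolygonal B) :
    RowsPolygonal (A * B) := by
  have hAB : ∀ i l, 0 ≤ (A * B) i l := fun i l =>
    sum_nonneg fun j _ => mul_nonneg (hA _ _) (hB _ _)
  have h' : ∀ j k, IsPolygonal fun l => √(B j l * (A * B) k l) := fun j k => by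
    simpa only [mul_apply] using IsPolygonal.sqrt_mul_sum (hB j) hB (hA k) (h j)
  intro j k
  simpa only [mul_apply] using
    (IsPolygonal.sqrt_mul_sum (hAB k) hB (hA j) fun i => (h' i k).sqrt_mul_comm).sqrt_mul_comm

variable [DecidableEq n]

lemma apply_eq_zero_of_apply_self_eq_one {E : Matrix n n ℝ} (hE : E ∈ doublyStochastic ℝ n)
    {k : n} (hk : E k k = 1) {j : n} (hj : j ≠ k) : E k j = 0 := by
  have h := sum_row_of_mem_doublyStochastic hE k
  rw [← add_sum_erase _ _ (mem_univ k), hk, add_eq_left,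
    sum_eq_zero_iff_of_nonneg fun _ _ => nonneg_of_mem_doublyStochastic hE] at h
  exact h j (by simp [hj])

lemma eq_swap_mix_of_apply_self_eq_one {E : Matrix n n ℝ} (hE : E ∈ doublyStochastic ℝ n)
    {a b : n} (hab : a ≠ b) (hdiag : ∀ i, i ≠ a → i ≠ b → E i i = 1) :
    E = E a a • 1 + (1 - E a a) • (Equiv.swap a b).permMatrix ℝ := by
  have hEt := transpose_mem_doublyStochastic_iff.2 hE
  have hrow : ∀ i j, i ≠ a → i ≠ b → j ≠ i → E i j = 0 := fun i j hia hib hji =>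
    apply_eq_zero_of_apply_self_eq_one hE (hdiag i hia hib) hji
  have hcol : ∀ i j, j ≠ a → j ≠ b → i ≠ j → E i j = 0 := fun i j hja hjb hij =>
    apply_eq_zero_of_apply_self_eq_one hEt (hdiag j hja hjb) hij
  have hrow_a : E a a + E a b = 1 := by
    rw [← sum_row_of_mem_doublyStochastic hE a, Fintype.sum_eq_add a b hab]
    exact fun j hj => hcol a j hj.1 hj.2 (Ne.symm hj.1)
  have hrow_b : E b a + E b b = 1 := by
    rw [← sum_row_of_mem_doublyStochastic hE b, Fintype.sum_eq_add a b hab]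
    exact fun j hj => hcol b j hj.1 hj.2 (Ne.symm hj.2)
  have hcol_a : E a a + E b a = 1 := by
    rw [← sum_col_of_mem_doublyStochastic hE a, Fintype.sum_eq_add a b hab]
    exact fun i hi => hrow i a hi.1 hi.2 (Ne.symm hi.1)
  ext i j
  simp only [Matrix.add_apply, Matrix.smul_apply, smul_eq_mul, one_apply, PEquiv.toMatrix_apply,
    Equiv.toPEquiv_apply, Option.mem_def, Option.some.injEq]
  by_cases hi : i = a ∨ i = b
  · by_cases hj : j = a ∨ j = b
    · rcases hi with rfl | rfl <;> rcases hj with rfl | rfl <;>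
        simp [hab, hab.symm] <;> linarith
    · obtain ⟨hja, hjb⟩ := not_or.1 hj
      rw [hcol i j hja hjb (by rintro rfl; tauto)]
      rcases hi with rfl | rfl <;> simp [Ne.symm hja, Ne.symm hjb]
  · obtain ⟨hia, hib⟩ := not_or.1 hi
    rw [Equiv.swap_apply_of_ne_of_ne hia hib]
    rcases eq_or_ne i j with rfl | hij
    · simp [hdiag i hia hib]
    · simp [hrow i j hia hib (Ne.symm hij), hij]

end Matrix

variable {d : ℕ}

lemma bistochastic_iff_mem_doublyStochastic {B : Matrix (Fin d) (Fin d) ℝ} :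
    Bistochastic B ↔ B ∈ doublyStochastic ℝ (Fin d) :=
  mem_doublyStochastic_iff_sum.symm

lemma bracelet_iff {B : Matrix (Fin d) (Fin d) ℝ} :
    Bracelet B ↔ B ∈ doublyStochastic ℝ (Fin d) ∧ RowsPolygonal Bᵀ ∧ RowsPolygonal B := by
  rw [Bracelet, bistochastic_iff_mem_doublyStochastic]
  rfl

lemma Bracelet.transpose {B : Matrix (Fin d) (Fin d) ℝ} (hB : Bracelet B) : Bracelet Bᵀ := by
  rw [bracelet_iff] at hB ⊢
  rw [transpose_transpose, transpose_mem_doublyStochastic_iff]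
  exact ⟨hB.1, hB.2.2, hB.2.1⟩

lemma Elementary.transpose {E : Matrix (Fin d) (Fin d) ℝ} (hE : Elementary E) :
    Elementary Eᵀ := by
  obtain ⟨hE, S, hS, hdiag⟩ := hE
  refine ⟨?_, S, hS, hdiag⟩
  rw [bistochastic_iff_mem_doublyStochastic] at hE ⊢
  exact transpose_mem_doublyStochastic_iff.2 hE

lemma Elementary.eq_one_or_eq_swap_mix {E : Matrix (Fin d) (Fin d) ℝ} (hE : Elementary E) :
    E = 1 ∨ ∃ a b, a ≠ b ∧ E = E a a • 1 + (1 - E a a) • (Equiv.swap a b).permMatrix ℝ := by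
  obtain ⟨hE, S, hS, hdiag⟩ := hE
  rw [bistochastic_iff_mem_doublyStochastic] at hE
  rcases lt_or_ge d 2 with hd | hd
  · have hsub : ∀ i j : Fin d, i = j := fun i j => Fin.ext (by omega)
    left
    ext i j
    obtain rfl := hsub i j
    rw [one_apply_eq, ← sum_row_of_mem_doublyStochastic hE i,
      Fintype.sum_eq_single i fun j hj => absurd (hsub j i) hj]
  · obtain ⟨T, hST, -, hT⟩ := exists_subsuperset_card_eq (n := 2) (subset_univ Sᶜ)
      (by rw [card_compl, Fintype.card_fin]; omega) (by rw [card_univ, Fintype.card_fin]; exact hd)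
    obtain ⟨a, b, hab, rfl⟩ := card_eq_two.1 hT
    refine .inr ⟨a, b, hab, eq_swap_mix_of_apply_self_eq_one hE hab fun i hia hib => hdiag i ?_⟩
    by_contra hiS
    simpa [hia, hib] using hST (mem_compl.2 hiS)

lemma Bracelet.elementary_mul {E B : Matrix (Fin d) (Fin d) ℝ} (hB : Bracelet B)
    (hE : Elementary E) : Bracelet (E * B) := by
  rw [bracelet_iff] at hB ⊢
  obtain ⟨hBds, hBcol, hBrow⟩ := hB
  have hEds := bistochastic_iff_mem_doublyStochastic.1 hE.1
  have hBnn : ∀ i j, 0 ≤ B i j := fun _ _ => nonneg_of_mem_doublyStochastic hBds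
  refine ⟨mul_mem hEds hBds, ?_, hBrow.mul (fun _ _ => nonneg_of_mem_doublyStochastic hEds) hBnn⟩
  rcases hE.eq_one_or_eq_swap_mix with rfl | ⟨a, b, hab, hEab⟩
  · rwa [one_mul]
  rw [hEab, add_mul, smul_mul, smul_mul, one_mul, PEquiv.toMatrix_toPEquiv_mul]
  intro k l
  simpa only [transpose_apply, Matrix.add_apply, Matrix.smul_apply, submatrix_apply, smul_eq_mul,
    id] using (hBcol k l).sqrt_mul_swap_mix (fun j => hBnn j k) (fun j => hBnn j l) hab
      (nonneg_of_mem_doublyStochastic hEds) (le_one_of_mem_doublyStochastic hEds)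

lemma Bracelet.mul_elementary {E B : Matrix (Fin d) (Fin d) ℝ} (hB : Bracelet B)
    (hE : Elementary E) : Bracelet (B * E) := by
  simpa using (hB.transpose.elementary_mul hE.transpose).transpose

lemma Bracelet.list_prod_mul {B : Matrix (Fin d) (Fin d) ℝ} (hB : Bracelet B)
    {L : List (Matrix (Fin d) (Fin d) ℝ)} (hL : ∀ E ∈ L, Elementary E) :
    Bracelet (L.prod * B) := by
  induction L with
  | nil => rwa [List.prod_nil, one_mul]
  | cons E L ih =>
    rw [List.forall_mem_cons] at hL
    rw [List.prod_cons, mul_assoc]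
    exact (ih hL.2).elementary_mul hL.1

lemma Bracelet.mul_list_prod {B : Matrix (Fin d) (Fin d) ℝ} (hB : Bracelet B)
    {L : List (Matrix (Fin d) (Fin d) ℝ)} (hL : ∀ E ∈ L, Elementary E) :
    Bracelet (B * L.prod) := by
  induction L generalizing B with
  | nil => rwa [List.prod_nil, mul_one]
  | cons E L ih =>
    rw [List.forall_mem_cons] at hL
    rw [List.prod_cons, ← mul_assoc]
    exact ih (hB.mul_elementary hL.1) hL.2

lemma isClosed_setOf_bracelet : IsClosed {B : Matrix (Fin d) (Fin d) ℝ | Bracelet B} := by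
  simp only [Bracelet, Bistochastic, Set.ofPred_and, Set.ofPred_forall]
  refine .inter (.inter ?_ (.inter ?_ ?_)) (.inter ?_ ?_) <;>
    repeat first
      | exact isClosed_le (by fun_prop) (by fun_prop)
      | exact isClosed_eq (by fun_prop) (by fun_prop)
      | refine isClosed_iInter fun _ => ?_

theorem factorisable_mul_bracelet_general {d : ℕ}
    (A B : Matrix (Fin d) (Fin d) ℝ)
    (hA : Factorisable A) (hB : Bracelet B) :
    Bracelet (A * B) ∧ Bracelet (B * A) := by
  constructor
  · refine closure_minimal ?_
      (isClosed_setOf_bracelet.preimage (continuous_id.matrix_mul continuous_const)) hA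
    rintro _ ⟨L, hL, rfl⟩
    exact hB.list_prod_mul hL
  · refine closure_minimal ?_
      (isClosed_setOf_bracelet.preimage (continuous_const.matrix_mul continuous_id)) hA
    rintro _ ⟨L, hL, rfl⟩
    exact hB.mul_list_prod hL

/-- If `A` is a factorisable bistochastic matrix and `B` is a bracelet bistochastic matrix,
then both `A * B` and `B * A` are bracelet bistochastic matrices. -/
theorem factorisable_mul_bracelet {d : ℕ} (hd : 1 ≤ d)
    (A B : Matrix (Fin d) (Fin d) ℝ)
    (hA : Factorisable A) (hA' : Bistochastic A) (hB : Bracelet B) :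
    Bracelet (A * B) ∧ Bracelet (B * A) :=
  factorisable_mul_bracelet_general A B hA hB
end

section
/- Let p, q ∈ ℝ^d be vectors with non-negative entries satisfying the bracelet condition, and let E be a d×d elementary bistochastic matrix. Then the vectors Ep and Eq also satisfy the bracelet condition. -/
/-- Two vectors `p, q` satisfy the bracelet condition if for every `k`,
`√(p k * q k) ≤ ∑_{j ≠ k} √(p j * q j)`. -/
def VecBracelet {d : ℕ} (p q : Fin d → ℝ) : Prop :=
  ∀ k, Real.sqrt (p k * q k) ≤ ∑ j ∈ Finset.univ.erase k, Real.sqrt (p j * q j)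

/-!
Only the geometric means `sₖ = √(pₖ qₖ)` matter: the bracelet condition says `2 sₖ ≤ ∑ⱼ sⱼ`.
An elementary bistochastic matrix fixes all coordinates but two, `a` and `b`, and mixes those by
`[[t, 1 - t], [1 - t, t]]`. By Cauchy–Schwarz the new `s_a + s_b` is no smaller, and since
`A² - B² = (2t - 1)(α² - β²)` for the new values `A, B` and the old ones `α, β`, the gap
`|s_a - s_b|` is no larger; these two facts preserve `2 sₖ ≤ ∑ⱼ sⱼ` for every `k`.
-/

open Finset

lemma Real.sqrt_mul_add_sqrt_mul_le {a b c e : ℝ} (ha : 0 ≤ a) (hb : 0 ≤ b) (hc : 0 ≤ c)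
    (he : 0 ≤ e) : √(a * c) + √(b * e) ≤ √((a + b) * (c + e)) := by
  have := Real.sum_sqrt_mul_sqrt_le univ (f := ![a, b]) (g := ![c, e])
    (fun i => by fin_cases i <;> simpa) (fun i => by fin_cases i <;> simpa)
  simpa [Fin.sum_univ_two, ← Real.sqrt_mul ha, ← Real.sqrt_mul hb,
    ← Real.sqrt_mul (add_nonneg ha hb)] using this

section Mixing

variable {t x₁ x₂ y₁ y₂ : ℝ}

lemma convex_comb_sqrt_mul_le_sqrt_mul (ht₀ : 0 ≤ t) (ht₁ : t ≤ 1) (hx₁ : 0 ≤ x₁) (hx₂ : 0 ≤ x₂)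
    (hy₁ : 0 ≤ y₁) (hy₂ : 0 ≤ y₂) :
    t * √(x₁ * y₁) + (1 - t) * √(x₂ * y₂) ≤
      √((t * x₁ + (1 - t) * x₂) * (t * y₁ + (1 - t) * y₂)) := by
  have hu : 0 ≤ 1 - t := sub_nonneg.2 ht₁
  have hscale : ∀ s x y : ℝ, 0 ≤ s → s * √(x * y) = √(s * x * (s * y)) := fun s x y hs => by
    rw [show s * x * (s * y) = s * s * (x * y) by ring, Real.sqrt_mul (mul_nonneg hs hs),
      Real.sqrt_mul_self hs]
  rw [hscale t _ _ ht₀, hscale (1 - t) _ _ hu]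
  exact Real.sqrt_mul_add_sqrt_mul_le (by positivity) (by positivity) (by positivity)
    (by positivity)

lemma sqrt_mul_add_sqrt_mul_le_mix (ht₀ : 0 ≤ t) (ht₁ : t ≤ 1) (hx₁ : 0 ≤ x₁) (hx₂ : 0 ≤ x₂)
    (hy₁ : 0 ≤ y₁) (hy₂ : 0 ≤ y₂) :
    √(x₁ * y₁) + √(x₂ * y₂) ≤
      √((t * x₁ + (1 - t) * x₂) * (t * y₁ + (1 - t) * y₂)) +
        √(((1 - t) * x₁ + t * x₂) * ((1 - t) * y₁ + t * y₂)) := by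
  have h₁ := convex_comb_sqrt_mul_le_sqrt_mul ht₀ ht₁ hx₁ hx₂ hy₁ hy₂
  have h₂ := convex_comb_sqrt_mul_le_sqrt_mul (t := 1 - t) (by linarith) (by linarith)
    hx₁ hx₂ hy₁ hy₂
  rw [sub_sub_cancel] at h₂
  linarith

lemma abs_sub_sqrt_mix_le (ht₀ : 0 ≤ t) (ht₁ : t ≤ 1) (hx₁ : 0 ≤ x₁) (hx₂ : 0 ≤ x₂)
    (hy₁ : 0 ≤ y₁) (hy₂ : 0 ≤ y₂) :
    |√((t * x₁ + (1 - t) * x₂) * (t * y₁ + (1 - t) * y₂)) -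
        √(((1 - t) * x₁ + t * x₂) * ((1 - t) * y₁ + t * y₂))| ≤
      |√(x₁ * y₁) - √(x₂ * y₂)| := by
  set A := √((t * x₁ + (1 - t) * x₂) * (t * y₁ + (1 - t) * y₂))
  set B := √(((1 - t) * x₁ + t * x₂) * ((1 - t) * y₁ + t * y₂))
  set α := √(x₁ * y₁)
  set β := √(x₂ * y₂)
  have hsum : α + β ≤ A + B := sqrt_mul_add_sqrt_mul_le_mix ht₀ ht₁ hx₁ hx₂ hy₁ hy₂
  have hA : A ^ 2 = (t * x₁ + (1 - t) * x₂) * (t * y₁ + (1 - t) * y₂) :=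
    Real.sq_sqrt (by positivity)
  have hB : B ^ 2 = ((1 - t) * x₁ + t * x₂) * ((1 - t) * y₁ + t * y₂) :=
    Real.sq_sqrt (by positivity)
  have hα : α ^ 2 = x₁ * y₁ := Real.sq_sqrt (by positivity)
  have hβ : β ^ 2 = x₂ * y₂ := Real.sq_sqrt (by positivity)
  -- the cross terms `x₁ y₂ + x₂ y₁` cancel in `A² - B²`
  have hdiff : (A - B) * (A + B) = (2 * t - 1) * ((α - β) * (α + β)) := by
    linear_combination hA - hB - (2 * t - 1) * (hα - hβ)
  have hA₀ : 0 ≤ A := Real.sqrt_nonneg _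
  have hB₀ : 0 ≤ B := Real.sqrt_nonneg _
  rcases (add_nonneg hA₀ hB₀).eq_or_lt with h | h
  · rw [show A - B = 0 by linarith, abs_zero]
    exact abs_nonneg _
  · refine le_of_mul_le_mul_right ?_ h
    calc |A - B| * (A + B) = |2 * t - 1| * (|α - β| * (α + β)) := by
          rw [← abs_of_pos h, ← abs_mul, hdiff, abs_mul, abs_mul,
            abs_of_nonneg (by positivity : 0 ≤ α + β)]
      _ ≤ 1 * (|α - β| * (A + B)) := by
          gcongr
          · exact abs_le.2 ⟨by linarith, by linarith⟩
      _ = |α - β| * (A + B) := one_mul _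

end Mixing

lemma vecBracelet_iff {d : ℕ} {p q : Fin d → ℝ} :
    VecBracelet p q ↔ ∀ k, 2 * √(p k * q k) ≤ ∑ j, √(p j * q j) := by
  refine forall_congr' fun k => ?_
  rw [sum_erase_eq_sub (mem_univ k)]
  constructor <;> intro h <;> linarith

lemma two_mul_le_sum_of_pair_update {ι : Type*} [Fintype ι] {s s' : ι → ℝ} {a b : ι}
    (hab : a ≠ b) (hs : ∀ k, 2 * s k ≤ ∑ j, s j) (heq : ∀ k, k ≠ a → k ≠ b → s' k = s k)
    (hsum : s a + s b ≤ s' a + s' b) (hgap : |s' a - s' b| ≤ |s a - s b|) (k : ι) :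
    2 * s' k ≤ ∑ j, s' j := by
  have hdiff : ∑ j, s' j = ∑ j, s j + (s' a - s a) + (s' b - s b) := by
    rw [add_assoc, ← Fintype.sum_eq_add a b hab fun j hj => sub_eq_zero.2 (heq j hj.1 hj.2),
      ← sum_add_distrib]
    simp
  have hgap' : |s a - s b| ≤ ∑ j, s j - s a - s b :=
    abs_sub_le_iff.2 ⟨by linarith [hs a], by linarith [hs b]⟩
  have hgap'' := abs_sub_le_iff.1 (hgap.trans hgap')
  rw [hdiff]
  by_cases hka : k = a
  · subst hka; linarith
  by_cases hkb : k = b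
  · subst hkb; linarith
  rw [heq k hka hkb]
  linarith [hs k]

namespace Bistochastic

variable {d : ℕ} {E : Matrix (Fin d) (Fin d) ℝ}

lemma transpose (hE : Bistochastic E) : Bistochastic E.transpose :=
  ⟨fun j k => hE.1 k j, hE.2.2, hE.2.1⟩

lemma off_diag_row_eq_zero (hE : Bistochastic E) {k j : Fin d} (hk : E k k = 1) (hj : j ≠ k) :
    E k j = 0 := by
  have hrow := hE.2.1 k
  rw [← add_sum_erase _ _ (mem_univ k), hk, add_eq_left] at hrow
  exact (sum_eq_zero_iff_of_nonneg fun j _ => hE.1 k j).1 hrow j (mem_erase.2 ⟨hj, mem_univ j⟩)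

lemma off_diag_col_eq_zero (hE : Bistochastic E) {k j : Fin d} (hk : E k k = 1) (hj : j ≠ k) :
    E j k = 0 :=
  hE.transpose.off_diag_row_eq_zero (k := k) hk hj

lemma mulVec_apply_eq_self (hE : Bistochastic E) {k : Fin d} (h : ∀ j, j ≠ k → E k j = 0)
    (v : Fin d → ℝ) : E.mulVec v k = v k := by
  have hkk : E k k = 1 := by
    rw [← hE.2.1 k, Fintype.sum_eq_single k h]
  rw [Matrix.mulVec, dotProduct, Fintype.sum_eq_single k fun j hj => by simp [h j hj], hkk,
    one_mul]

lemma mulVec_eq_self (hE : Bistochastic E) (h : ∀ j k, j ≠ k → E j j = 1 ∨ E k k = 1)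
    (v : Fin d → ℝ) : E.mulVec v = v := by
  funext k
  refine hE.mulVec_apply_eq_self (fun j hj => ?_) v
  rcases h k j hj.symm with hk | hj'
  · exact hE.off_diag_row_eq_zero hk hj
  · exact hE.off_diag_col_eq_zero hj' hj.symm

lemma exists_mulVec_eq_mix (hE : Bistochastic E) {a b : Fin d} (hab : a ≠ b)
    (h : ∀ k, k ≠ a → k ≠ b → E k k = 1) :
    ∃ t, 0 ≤ t ∧ t ≤ 1 ∧ ∀ v : Fin d → ℝ,
      E.mulVec v a = t * v a + (1 - t) * v b ∧ E.mulVec v b = (1 - t) * v a + t * v b := by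
  have hrow : ∀ i, i = a ∨ i = b → ∀ v : Fin d → ℝ,
      E.mulVec v i = E i a * v a + E i b * v b := fun i hi v =>
    Fintype.sum_eq_add a b hab fun j hj => by
      dsimp only
      rw [hE.off_diag_col_eq_zero (h j hj.1 hj.2) (by rcases hi with rfl | rfl <;> tauto),
        zero_mul]
  have hsum : ∀ i, i = a ∨ i = b → E i a + E i b = 1 := fun i hi => by
    simpa [Matrix.mulVec, dotProduct, hE.2.1 i] using (hrow i hi fun _ => 1).symm
  have hcol : E a a + E b a = 1 := by
    rw [← hE.2.2 a, Fintype.sum_eq_add a b hab fun j hj =>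
      hE.off_diag_row_eq_zero (h j hj.1 hj.2) hj.1.symm]
  have ha := hsum a (.inl rfl)
  have hb := hsum b (.inr rfl)
  refine ⟨E a a, hE.1 a a, by linarith [hE.1 a b], fun v => ⟨?_, ?_⟩⟩
  · rw [hrow a (.inl rfl), show E a b = 1 - E a a by linarith]
  · rw [hrow b (.inr rfl), show E b a = 1 - E a a by linarith, show E b b = E a a by linarith]

end Bistochastic

lemma Elementary.diag_eq_one_cases {d : ℕ} {E : Matrix (Fin d) (Fin d) ℝ} (hE : Elementary E) :
    (∀ j k, j ≠ k → E j j = 1 ∨ E k k = 1) ∨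
      ∃ a b, a ≠ b ∧ ∀ k, k ≠ a → k ≠ b → E k k = 1 := by
  obtain ⟨-, S, hS, hdiag⟩ := hE
  have hfix : ∀ k, k ∉ Sᶜ → E k k = 1 := fun k hk => hdiag k (by simpa using hk)
  have hcard : Sᶜ.card ≤ 2 := by rw [card_compl, Fintype.card_fin]; omega
  rcases hcard.lt_or_eq with hlt | htwo
  · refine .inl fun j k hjk => ?_
    by_contra! h
    exact hjk (card_le_one.1 (Nat.lt_succ_iff.1 hlt) j (by_contra fun hj => h.1 (hfix j hj)) k
      (by_contra fun hk => h.2 (hfix k hk)))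
  · obtain ⟨a, b, hab, hT⟩ := card_eq_two.1 htwo
    exact .inr ⟨a, b, hab, fun k ha hb => hfix k (by simp [hT, ha, hb])⟩

/-- If `p, q` have non-negative entries and satisfy the bracelet condition, and `E` is an
elementary bistochastic matrix, then `E p` and `E q` satisfy the bracelet condition. -/
theorem elementary_preserves_vecBracelet {d : ℕ} (p q : Fin d → ℝ)
    (hp : ∀ j, 0 ≤ p j) (hq : ∀ j, 0 ≤ q j) (hpq : VecBracelet p q)
    (E : Matrix (Fin d) (Fin d) ℝ) (hE : Elementary E) :
    VecBracelet (E.mulVec p) (E.mulVec q) := by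
  rcases hE.diag_eq_one_cases with hid | ⟨a, b, hab, hout⟩
  · rwa [hE.1.mulVec_eq_self hid, hE.1.mulVec_eq_self hid]
  obtain ⟨t, ht₀, ht₁, hmix⟩ := hE.1.exists_mulVec_eq_mix hab hout
  have hfix : ∀ v k, k ≠ a → k ≠ b → E.mulVec v k = v k := fun v k ha hb =>
    hE.1.mulVec_apply_eq_self (fun _ hj => hE.1.off_diag_row_eq_zero (hout k ha hb) hj) v
  rw [vecBracelet_iff] at hpq ⊢
  refine two_mul_le_sum_of_pair_update hab hpq
    (fun k ha hb => by rw [hfix p k ha hb, hfix q k ha hb]) ?_ ?_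
  all_goals rw [(hmix p).1, (hmix q).1, (hmix p).2, (hmix q).2]
  · exact sqrt_mul_add_sqrt_mul_le_mix ht₀ ht₁ (hp a) (hp b) (hq a) (hq b)
  · exact abs_sub_sqrt_mix_le ht₀ ht₁ (hp a) (hp b) (hq a) (hq b)
end

section
/- Let d ≥ 2 and t ∈ [0,1]. Let p = [t, 1−t, 0, …, 0] and q = [1−t, t, 0, …, 0] be vectors of size d, and let B be a d×d bracelet bistochastic matrix. Then the vectors Bp and Bq satisfy the bracelet condition. -/
/-- Two-term Minkowski-type inequality for the seminorm `√(x² + C y²)`. -/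
lemma mink_two (C a b c' d' : ℝ) (hC : 0 ≤ C) :
    Real.sqrt ((a + c')^2 + C * (b + d')^2)
      ≤ Real.sqrt (a^2 + C*b^2) + Real.sqrt (c'^2 + C*d'^2) := by
  have hX : (0:ℝ) ≤ a^2 + C*b^2 := by positivity
  have hY : (0:ℝ) ≤ c'^2 + C*d'^2 := by positivity
  have key : a*c' + C*(b*d') ≤ Real.sqrt ((a^2 + C*b^2) * (c'^2 + C*d'^2)) := by
    rcases le_or_gt (a*c' + C*(b*d')) 0 with h | h
    · exact h.trans (Real.sqrt_nonneg _)
    · rw [show a*c' + C*(b*d') = Real.sqrt ((a*c' + C*(b*d'))^2) by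
        rw [Real.sqrt_sq h.le]]
      apply Real.sqrt_le_sqrt
      nlinarith [sq_nonneg (a*d' - b*c'), hC]
  have hR : 0 ≤ Real.sqrt (a^2 + C*b^2) + Real.sqrt (c'^2 + C*d'^2) := by positivity
  rw [show Real.sqrt (a^2 + C*b^2) + Real.sqrt (c'^2 + C*d'^2)
      = Real.sqrt ((Real.sqrt (a^2 + C*b^2) + Real.sqrt (c'^2 + C*d'^2))^2) by
    rw [Real.sqrt_sq hR]]
  apply Real.sqrt_le_sqrt
  have e1 : (Real.sqrt (a^2 + C*b^2))^2 = a^2 + C*b^2 := Real.sq_sqrt hX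
  have e2 : (Real.sqrt (c'^2 + C*d'^2))^2 = c'^2 + C*d'^2 := Real.sq_sqrt hY
  have e3 : Real.sqrt (a^2 + C*b^2) * Real.sqrt (c'^2 + C*d'^2)
      = Real.sqrt ((a^2 + C*b^2) * (c'^2 + C*d'^2)) := (Real.sqrt_mul hX _).symm
  nlinarith [key]

/-- Minkowski inequality for finite sums with the seminorm `√(x² + C y²)`. -/
lemma mink {ι : Type*} (s : Finset ι) (C : ℝ) (hC : 0 ≤ C) (x y : ι → ℝ) :
    Real.sqrt ((∑ i ∈ s, x i)^2 + C * (∑ i ∈ s, y i)^2)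
      ≤ ∑ i ∈ s, Real.sqrt ((x i)^2 + C * (y i)^2) := by
  induction s using Finset.cons_induction with
  | empty => simp
  | cons a s ha ih =>
    rw [Finset.sum_cons, Finset.sum_cons, Finset.sum_cons]
    calc Real.sqrt ((x a + ∑ i ∈ s, x i)^2 + C * (y a + ∑ i ∈ s, y i)^2)
        ≤ Real.sqrt ((x a)^2 + C*(y a)^2)
          + Real.sqrt ((∑ i ∈ s, x i)^2 + C*(∑ i ∈ s, y i)^2) :=
          mink_two C (x a) (y a) _ _ hC
      _ ≤ _ := by linarith [ih]

/-- For `t ∈ [0,1]`, `p = [t, 1-t, 0, …, 0]`, `q = [1-t, t, 0, …, 0]` and a bracelet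
bistochastic matrix `B`, the vectors `B p` and `B q` satisfy the bracelet condition. -/
theorem bracelet_mulVec_pq {d : ℕ} (hd : 2 ≤ d) (t : ℝ) (ht : t ∈ Set.Icc (0 : ℝ) 1)
    (B : Matrix (Fin d) (Fin d) ℝ) (hB : Bracelet B) :
    VecBracelet
      (B.mulVec fun j => if (j : ℕ) = 0 then t else if (j : ℕ) = 1 then 1 - t else 0)
      (B.mulVec fun j => if (j : ℕ) = 0 then 1 - t else if (j : ℕ) = 1 then t else 0) := by
  obtain ⟨⟨hBnn, hrow, hcol⟩, hcolB, hrowB⟩ := hB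
  obtain ⟨ht0, ht1⟩ := ht
  have h0d : 0 < d := by omega
  have h1d : 1 < d := by omega
  set i0 : Fin d := ⟨0, h0d⟩ with hi0
  set i1 : Fin d := ⟨1, h1d⟩ with hi1
  have hne : i0 ≠ i1 := by simp [hi0, hi1, Fin.ext_iff]
  -- computation of the matrix-vector products
  have hmul : ∀ (x y : ℝ) (j : Fin d),
      B.mulVec (fun k => if (k : ℕ) = 0 then x else if (k : ℕ) = 1 then y else 0) j
        = B j i0 * x + B j i1 * y := by
    intro x y j
    show (∑ k, B j k * _) = _
    have step : ∀ k : Fin d,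
        B j k * (if (k : ℕ) = 0 then x else if (k : ℕ) = 1 then y else 0)
          = (if k = i0 then B j i0 * x else 0) + (if k = i1 then B j i1 * y else 0) := by
      intro k
      by_cases h0 : (k : ℕ) = 0
      · have hk : k = i0 := by simp [Fin.ext_iff, hi0, h0]
        subst hk
        rw [if_pos h0, if_pos rfl, if_neg hne]
        ring
      · by_cases h1 : (k : ℕ) = 1
        · have hk : k = i1 := by simp [Fin.ext_iff, hi1, h1]
          subst hk
          rw [if_neg h0, if_pos h1, if_neg (Ne.symm hne), if_pos rfl]
          ring
        · have hk0 : k ≠ i0 := by simp [Fin.ext_iff, hi0, h0]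
          have hk1 : k ≠ i1 := by simp [Fin.ext_iff, hi1, h1]
          rw [if_neg h0, if_neg h1, if_neg hk0, if_neg hk1]
          ring
    rw [Finset.sum_congr rfl (fun k _ => step k), Finset.sum_add_distrib,
      Finset.sum_ite_eq' Finset.univ i0, Finset.sum_ite_eq' Finset.univ i1]
    simp
  intro k
  set c : ℝ := t * (1 - t) with hc
  have hc0 : 0 ≤ c := by nlinarith
  have h4c : 0 ≤ 1 - 4*c := by nlinarith [sq_nonneg (1 - 2*t)]
  set a : Fin d → ℝ := fun j => Real.sqrt (B j i0 * B j i1) with ha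
  set g : Fin d → ℝ := fun j => B j i0 + B j i1 with hg
  have hanonneg : ∀ j, 0 ≤ a j := fun j => Real.sqrt_nonneg _
  have hasq : ∀ j, (a j)^2 = B j i0 * B j i1 := fun j =>
    Real.sq_sqrt (mul_nonneg (hBnn j i0) (hBnn j i1))
  have hrsq : (Real.sqrt (1 - 4*c))^2 = 1 - 4*c := Real.sq_sqrt h4c
  -- identity for each coordinate
  have hfj : ∀ j : Fin d,
      Real.sqrt ((B.mulVec fun k => if (k : ℕ) = 0 then t else if (k : ℕ) = 1 then 1 - t else 0) j
        * (B.mulVec fun k => if (k : ℕ) = 0 then 1 - t else if (k : ℕ) = 1 then t else 0) j)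
      = Real.sqrt ((Real.sqrt (1 - 4*c) * a j)^2 + c * (g j)^2) := by
    intro j
    rw [hmul, hmul]
    congr 1
    have h1 := hasq j
    rw [mul_pow, hrsq, h1, hg, hc]
    ring
  -- column bracelet condition for columns 0, 1
  have hbr : 2 * a k ≤ ∑ j, a j := hcolB i0 i1 k
  -- total column sums
  have hgsum : ∑ j, g j = 2 := by
    rw [hg]
    rw [Finset.sum_add_distrib, hcol i0, hcol i1]
    norm_num
  -- g k ≤ 1
  have hak : a k ≤ ∑ j ∈ Finset.univ.erase k, a j := by
    rw [← Finset.add_sum_erase _ a (Finset.mem_univ k)] at hbr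
    linarith
  have hCS : (∑ j ∈ Finset.univ.erase k, a j)^2
      ≤ (∑ j ∈ Finset.univ.erase k, B j i0) * (∑ j ∈ Finset.univ.erase k, B j i1) :=
    Finset.sum_sq_le_sum_mul_sum_of_sq_eq_mul _ (fun j _ => hBnn j i0) (fun j _ => hBnn j i1)
      (fun j _ => hasq j)
  have hS0 : ∑ j ∈ Finset.univ.erase k, B j i0 = 1 - B k i0 := by
    have := hcol i0
    rw [← Finset.add_sum_erase _ (fun j => B j i0) (Finset.mem_univ k)] at this
    linarith
  have hS1 : ∑ j ∈ Finset.univ.erase k, B j i1 = 1 - B k i1 := by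
    have := hcol i1
    rw [← Finset.add_sum_erase _ (fun j => B j i1) (Finset.mem_univ k)] at this
    linarith
  have hgk1 : g k ≤ 1 := by
    have h1 : (a k)^2 ≤ (∑ j ∈ Finset.univ.erase k, a j)^2 := by
      have h := Finset.sum_nonneg (fun j (_ : j ∈ Finset.univ.erase k) => hanonneg j)
      nlinarith [hanonneg k]
    rw [hasq k] at h1
    rw [hS0, hS1] at hCS
    show B k i0 + B k i1 ≤ 1
    nlinarith
  have hgk0 : 0 ≤ g k := add_nonneg (hBnn k i0) (hBnn k i1)
  -- Minkowski step
  have hmk := mink Finset.univ c hc0 (fun j => Real.sqrt (1 - 4*c) * a j) g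
  rw [← Finset.mul_sum, hgsum] at hmk
  -- conclude
  have hsum2 : 2 * Real.sqrt ((Real.sqrt (1 - 4*c) * a k)^2 + c * (g k)^2)
      ≤ ∑ j, Real.sqrt ((Real.sqrt (1 - 4*c) * a j)^2 + c * (g j)^2) := by
    refine le_trans ?_ hmk
    rw [show (2 : ℝ) * Real.sqrt ((Real.sqrt (1 - 4*c) * a k)^2 + c * (g k)^2)
        = Real.sqrt (4 * ((Real.sqrt (1 - 4*c) * a k)^2 + c * (g k)^2)) by
      rw [show (4:ℝ) * ((Real.sqrt (1 - 4*c) * a k)^2 + c * (g k)^2)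
          = 2^2 * ((Real.sqrt (1 - 4*c) * a k)^2 + c * (g k)^2) by ring,
        Real.sqrt_mul (by positivity), Real.sqrt_sq (by norm_num)]]
    apply Real.sqrt_le_sqrt
    have hsa : 2 * a k ≤ ∑ j, a j := hbr
    have hsann : 0 ≤ ∑ j, a j := Finset.sum_nonneg (fun j _ => hanonneg j)
    have hr0 : 0 ≤ Real.sqrt (1 - 4*c) := Real.sqrt_nonneg _
    nlinarith [mul_pow (Real.sqrt (1 - 4*c)) (∑ j, a j) 2, sq_nonneg (Real.sqrt (1-4*c)),
      mul_le_mul_of_nonneg_left (show (g k)^2 ≤ 1 by nlinarith [hgk0, hgk1]) hc0,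
      mul_le_mul_of_nonneg_left (mul_self_le_mul_self (by linarith [hanonneg k]) hsa) (sq_nonneg (Real.sqrt (1-4*c)))]
  rw [hfj k]
  calc Real.sqrt ((Real.sqrt (1 - 4*c) * a k)^2 + c * (g k)^2)
      ≤ ∑ j ∈ Finset.univ.erase k, Real.sqrt ((Real.sqrt (1 - 4*c) * a j)^2 + c * (g j)^2) := by
        rw [← Finset.add_sum_erase _
          (fun j => Real.sqrt ((Real.sqrt (1 - 4*c) * a j)^2 + c * (g j)^2))
          (Finset.mem_univ k)] at hsum2
        linarith
    _ = _ := Finset.sum_congr rfl (fun j _ => (hfj j).symm)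
end

section
/- Let d ≥ 3 and t ∈ [0,1]. Let p = [t, 1−t, 0, …, 0] be a vector of size d, let B be a d×d bracelet bistochastic matrix, and let e_k be the k-th standard unit vector for any k ≥ 3. Then the vectors Bp and Be_k satisfy the bracelet condition. -/
/-! Writing `(B p)_j (B q)_j = ∑_{l,m} x_j(l,m)^2` with
`x_j(l,m) = √(p_l q_m) √(B_{jl} B_{jm})`, each coordinate `(l,m)` of the vectors `x_j`
satisfies the bracelet inequality by the column condition on `B`, and Minkowski's inequality
in `ℝ^(d×d)` carries it over to the norms `‖x_j‖ = √((B p)_j (B q)_j)`. -/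

open Finset Matrix

theorem Real.sqrt_sum_sq_sum_le {ι κ : Type*} [Fintype κ] (s : Finset ι) (x : ι → κ → ℝ) :
    √(∑ c, (∑ j ∈ s, x j c) ^ 2) ≤ ∑ j ∈ s, √(∑ c, x j c ^ 2) := by
  have norm_toLp (y : κ → ℝ) : ‖WithLp.toLp 2 y‖ = √(∑ c, y c ^ 2) := by
    simp [EuclideanSpace.norm_eq]
  calc √(∑ c, (∑ j ∈ s, x j c) ^ 2) = ‖∑ j ∈ s, WithLp.toLp 2 (x j)‖ := by
        rw [← WithLp.toLp_sum, norm_toLp]; simp only [Finset.sum_apply]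
    _ ≤ ∑ j ∈ s, ‖WithLp.toLp 2 (x j)‖ := norm_sum_le _ _
    _ = ∑ j ∈ s, √(∑ c, x j c ^ 2) := by simp only [norm_toLp]

theorem le_sum_erase_of_two_mul_le_sum {ι : Type*} [Fintype ι] [DecidableEq ι] {f : ι → ℝ}
    {m : ι} (h : 2 * f m ≤ ∑ j, f j) : f m ≤ ∑ j ∈ univ.erase m, f j := by
  rw [← add_sum_erase univ f (mem_univ m)] at h
  linarith

theorem vecBracelet_of_mul_eq_sum_sq {d : ℕ} {κ : Type*} [Fintype κ] {p q : Fin d → ℝ}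
    (x : Fin d → κ → ℝ) (hx : ∀ j c, 0 ≤ x j c) (hpq : ∀ j, p j * q j = ∑ c, x j c ^ 2)
    (hx_bracelet : ∀ m c, x m c ≤ ∑ j ∈ univ.erase m, x j c) : VecBracelet p q := by
  intro m
  calc √(p m * q m) = √(∑ c, x m c ^ 2) := by rw [hpq]
    _ ≤ √(∑ c, (∑ j ∈ univ.erase m, x j c) ^ 2) := by
        gcongr with c
        exacts [hx m c, hx_bracelet m c]
    _ ≤ ∑ j ∈ univ.erase m, √(∑ c, x j c ^ 2) := Real.sqrt_sum_sq_sum_le _ _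
    _ = ∑ j ∈ univ.erase m, √(p j * q j) := by simp only [hpq]

theorem vecBracelet_mulVec {d : ℕ} {B : Matrix (Fin d) (Fin d) ℝ} (hB : ∀ j k, 0 ≤ B j k)
    (hcols : ∀ k l j₀, 2 * √(B j₀ k * B j₀ l) ≤ ∑ j, √(B j k * B j l))
    {p q : Fin d → ℝ} (hp : 0 ≤ p) (hq : 0 ≤ q) : VecBracelet (B *ᵥ p) (B *ᵥ q) := by
  refine vecBracelet_of_mul_eq_sum_sq
    (fun j (c : Fin d × Fin d) => √(p c.1 * q c.2) * √(B j c.1 * B j c.2))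
    (fun _ _ => by positivity) ?_ ?_
  · intro j
    rw [mulVec, mulVec, dotProduct, dotProduct, sum_mul_sum,
      ← Fintype.sum_prod_type']
    refine Fintype.sum_congr _ _ fun c => ?_
    rw [mul_pow, Real.sq_sqrt (mul_nonneg (hp c.1) (hq c.2)),
      Real.sq_sqrt (mul_nonneg (hB j c.1) (hB j c.2))]
    ring
  · intro m c
    rw [← mul_sum]
    have hcol := le_sum_erase_of_two_mul_le_sum (f := fun j => √(B j c.1 * B j c.2))
      (hcols c.1 c.2 m)
    exact mul_le_mul_of_nonneg_left hcol (Real.sqrt_nonneg _)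

theorem bracelet_mulVec_p_unit_general {d : ℕ} (t : ℝ) (ht : t ∈ Set.Icc (0 : ℝ) 1)
    (B : Matrix (Fin d) (Fin d) ℝ) (hB : Bracelet B) (k : Fin d) :
    VecBracelet
      (B.mulVec fun j => if (j : ℕ) = 0 then t else if (j : ℕ) = 1 then 1 - t else 0)
      (B.mulVec (Pi.single k 1)) := by
  obtain ⟨⟨hB_nonneg, -, -⟩, hcols, -⟩ := hB
  refine vecBracelet_mulVec hB_nonneg hcols (fun j => ?_)
    (Pi.single_nonneg.2 zero_le_one)
  simp only [Pi.zero_apply]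
  split_ifs <;> linarith [ht.1, ht.2]

/-- For `t ∈ [0,1]`, `p = [t, 1-t, 0, …, 0]`, a bracelet bistochastic matrix `B`, and the
`k`-th standard unit vector with `k ≥ 3` (zero-based: `(k : ℕ) ≥ 2`), the vectors `B p` and
`B e_k` satisfy the bracelet condition. -/
theorem bracelet_mulVec_p_unit {d : ℕ} (hd : 3 ≤ d) (t : ℝ) (ht : t ∈ Set.Icc (0 : ℝ) 1)
    (B : Matrix (Fin d) (Fin d) ℝ) (hB : Bracelet B) (k : Fin d) (hk : 2 ≤ (k : ℕ)) :
    VecBracelet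
      (B.mulVec fun j => if (j : ℕ) = 0 then t else if (j : ℕ) = 1 then 1 - t else 0)
      (B.mulVec (Pi.single k 1)) :=
  bracelet_mulVec_p_unit_general t ht B hB k
end

section
/- For every dimension d ≥ 1 and every λ ∈ [0,1], the matrix C_d(λ) = (1−λ)·I_d + λ·W_d on the ray connecting the identity matrix with the flat matrix is a factorisable bistochastic matrix. -/
/-- The flat (van der Waerden) matrix `W_d` with all entries equal to `1/d`. -/
noncomputable def flatMatrix (d : ℕ) : Matrix (Fin d) (Fin d) ℝ := Matrix.of fun _ _ => (1 : ℝ) / d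

/-!
On the ray `C(x) = (1 - x) • 1 + x • W` one has `C(x) * C(y) = C(1 - (1 - x)(1 - y))`, so
`C(λ) = C(w)ⁿ` with `1 - w = (1 - λ)^(1/n)`, so `w = O(1/n)`. A sweep of T-transforms of weight `t`
over all ordered pairs of coordinates is `1 + 2dt • (W - 1) + o(t)`, i.e. it leaves the identity
with the same velocity as `t ↦ C(2dt)`. All these matrices lie in the unit ball of the
`ℓ∞`-operator norm, where `‖aⁿ - bⁿ‖ ≤ n ‖a - b‖`; hence the `n`-th powers of the sweeps of
weight `w / 2d` converge to `C(λ)` for `λ < 1`, and `λ = 1` follows by closedness.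
-/

open Filter Topology Asymptotics

section NormedRing

variable {R : Type*}

theorem norm_pow_sub_pow_le [SeminormedRing R] [NormOneClass R] {a b : R} (ha : ‖a‖ ≤ 1)
    (hb : ‖b‖ ≤ 1) (n : ℕ) : ‖a ^ n - b ^ n‖ ≤ n * ‖a - b‖ := by
  induction n with
  | zero => simp
  | succ n ih =>
    have h : a ^ (n + 1) - b ^ (n + 1) = a * (a ^ n - b ^ n) + (a - b) * b ^ n := by
      rw [pow_succ', pow_succ']; noncomm_ring
    calc ‖a ^ (n + 1) - b ^ (n + 1)‖ ≤ ‖a‖ * ‖a ^ n - b ^ n‖ + ‖a - b‖ * ‖b ^ n‖ := by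
          rw [h]; exact (norm_add_le _ _).trans (add_le_add (norm_mul_le _ _) (norm_mul_le _ _))
      _ ≤ 1 * (n * ‖a - b‖) + ‖a - b‖ * 1 := by
          gcongr
          exact (norm_pow_le _ n).trans (pow_le_one₀ (norm_nonneg _) hb)
      _ = (n + 1 : ℕ) * ‖a - b‖ := by push_cast; ring

theorem tendsto_pow_of_isLittleO_sub [SeminormedRing R] [NormOneClass R] {a b : ℕ → R} {c : R}
    (ha : ∀ n, ‖a n‖ ≤ 1) (hb : ∀ n, ‖b n‖ ≤ 1) (hbc : ∀ᶠ n in atTop, b n ^ n = c)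
    (hab : (fun n => a n - b n) =o[atTop] fun n => (n : ℝ)⁻¹) :
    Tendsto (fun n => a n ^ n) atTop (𝓝 c) := by
  have hsmall : Tendsto (fun n => n * ‖a n - b n‖) atTop (𝓝 0) := by
    simpa [div_inv_eq_mul, mul_comm] using hab.norm_left.tendsto_div_nhds_zero
  rw [tendsto_iff_norm_sub_tendsto_zero]
  refine squeeze_zero' (Eventually.of_forall fun _ => norm_nonneg _) ?_ hsmall
  filter_upwards [hbc] with n hn
  rw [← hn]
  exact norm_pow_sub_pow_le (ha n) (hb n) n

/-- A Chernoff-type product formula: only the velocity at `0` matters. -/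
theorem tendsto_pow_of_hasDerivAt [NormedRing R] [NormedAlgebra ℝ R] [NormOneClass R]
    {F G : ℝ → R} {A c : R} {t : ℕ → ℝ} (hF : HasDerivAt F A 0) (hG : HasDerivAt G A 0)
    (hFG : F 0 = G 0) (hFt : ∀ n, ‖F (t n)‖ ≤ 1) (hGt : ∀ n, ‖G (t n)‖ ≤ 1)
    (ht : t =O[atTop] fun n => (n : ℝ)⁻¹) (hGc : ∀ᶠ n in atTop, G (t n) ^ n = c) :
    Tendsto (fun n => F (t n) ^ n) atTop (𝓝 c) := by
  have hsub : (fun x => F x - G x) =o[𝓝 0] fun x => x := by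
    simpa [hFG] using hasDerivAt_iff_isLittleO_nhds_zero.mp (hF.sub hG)
  have ht0 : Tendsto t atTop (𝓝 0) := ht.trans_tendsto tendsto_inv_atTop_nhds_zero_nat
  exact tendsto_pow_of_isLittleO_sub hFt hGt hGc ((hsub.comp_tendsto ht0).trans_isBigO ht)

theorem hasDerivAt_list_prod_one_add_smul {𝕜 : Type*} [NontriviallyNormedField 𝕜] [NormedRing R]
    [NormedAlgebra 𝕜 R] (l : List R) :
    HasDerivAt (fun t : 𝕜 => (l.map fun x => 1 + t • x).prod) l.sum 0 := by
  induction l with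
  | nil => simpa using hasDerivAt_const (0 : 𝕜) (1 : R)
  | cons x l ih =>
    have hx : HasDerivAt (fun t : 𝕜 => 1 + t • x) x 0 := by
      simpa using ((hasDerivAt_id (0 : 𝕜)).smul_const x).const_add 1
    convert hx.fun_mul ih using 1 <;> simp [List.map_const']

end NormedRing

-- In the `ℓ∞`-operator norm (maximal absolute row sum) bistochastic matrices have norm `1`.
attribute [local instance] Matrix.linftyOpNormedRing Matrix.linftyOpNormedAlgebra

variable {d : ℕ}

abbrev elementaryProducts (d : ℕ) : Submonoid (Matrix (Fin d) (Fin d) ℝ) :=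
  Submonoid.closure {E | Elementary E}

theorem factorisable_iff_mem_closure {B : Matrix (Fin d) (Fin d) ℝ} :
    Factorisable B ↔ B ∈ closure (elementaryProducts d : Set (Matrix (Fin d) (Fin d) ℝ)) := by
  rw [Submonoid.closure_eq_image_prod]
  simp only [Factorisable, Set.image, Set.mem_ofPred_eq, eq_comm]

theorem Bistochastic.norm_le_one {B : Matrix (Fin d) (Fin d) ℝ} (hB : Bistochastic B) :
    ‖B‖ ≤ 1 := by
  rw [Matrix.linfty_opNorm_def, NNReal.coe_le_one]
  refine Finset.sup_le fun j _ => ?_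
  rw [← NNReal.coe_le_one, NNReal.coe_sum]
  simp only [coe_nnnorm, Real.norm_of_nonneg (hB.1 j _), hB.2.1 j, le_refl]

theorem norm_le_one_of_mem_elementaryProducts [NeZero d] {M : Matrix (Fin d) (Fin d) ℝ}
    (hM : M ∈ elementaryProducts d) : ‖M‖ ≤ 1 := by
  induction hM using Submonoid.closure_induction with
  | mem E hE => exact Bistochastic.norm_le_one hE.1
  | one => exact norm_one.le
  | mul P Q _ _ hP hQ => exact (norm_mul_le P Q).trans (mul_le_one₀ hP (norm_nonneg Q) hQ)

def pairDiff (j k : Fin d) : Fin d → ℝ := Pi.single j 1 - Pi.single k 1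

/-- `1 + t • mixGen j k` is the T-transform replacing coordinates `j, k` by their `(1 - t, t)`
mixtures (the identity when `j = k`). -/
def mixGen (j k : Fin d) : Matrix (Fin d) (Fin d) ℝ :=
  -Matrix.vecMulVec (pairDiff j k) (pairDiff j k)

theorem sum_pairDiff (j k : Fin d) : ∑ i, pairDiff j k i = 0 := by
  simp [pairDiff, Finset.sum_sub_distrib]

theorem pairDiff_of_ne {j k i : Fin d} (hj : i ≠ j) (hk : i ≠ k) : pairDiff j k i = 0 := by
  simp [pairDiff, hj, hk]

theorem pairDiff_mul_self_le_one (j k i : Fin d) : pairDiff j k i * pairDiff j k i ≤ 1 := by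
  simp only [pairDiff, Pi.sub_apply, Pi.single_apply]
  split_ifs <;> norm_num

theorem pairDiff_mul_nonpos {j k a b : Fin d} (hab : a ≠ b) :
    pairDiff j k a * pairDiff j k b ≤ 0 := by
  simp only [pairDiff, Pi.sub_apply, Pi.single_apply]
  split_ifs <;> simp_all

theorem bistochastic_one_add_smul_mixGen (j k : Fin d) {t : ℝ} (ht0 : 0 ≤ t) (ht1 : t ≤ 1) :
    Bistochastic (1 + t • mixGen j k) := by
  have entry : ∀ a b, (1 + t • mixGen j k) a b =
      (1 : Matrix (Fin d) (Fin d) ℝ) a b - t * (pairDiff j k a * pairDiff j k b) := by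
    intro a b
    simp [mixGen, Matrix.vecMulVec_apply, sub_eq_add_neg]
  refine ⟨fun a b => ?_, fun a => ?_, fun b => ?_⟩
  · rw [entry]
    rcases eq_or_ne a b with rfl | hab
    · nlinarith [pairDiff_mul_self_le_one j k a, Matrix.one_apply_eq (α := ℝ) a]
    · rw [Matrix.one_apply_ne hab]
      nlinarith [pairDiff_mul_nonpos (j := j) (k := k) hab]
  · simp only [entry, Finset.sum_sub_distrib, ← Finset.mul_sum, sum_pairDiff]
    simp [Matrix.one_apply]
  · simp only [entry, Finset.sum_sub_distrib, ← Finset.sum_mul, ← Finset.mul_sum, sum_pairDiff]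
    simp [Matrix.one_apply]

theorem elementary_one_add_smul_mixGen (j k : Fin d) {t : ℝ} (ht0 : 0 ≤ t) (ht1 : t ≤ 1) :
    Elementary (1 + t • mixGen j k) := by
  refine ⟨bistochastic_one_add_smul_mixGen j k ht0 ht1, Finset.univ \ {j, k}, ?_, fun i hi => ?_⟩
  · rw [Finset.card_sdiff_of_subset (Finset.subset_univ _), Finset.card_univ, Fintype.card_fin]
    have := Finset.card_le_two (a := j) (b := k)
    omega
  · simp only [Finset.mem_sdiff, Finset.mem_univ, Finset.mem_insert, Finset.mem_singleton,
      not_or, true_and] at hi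
    simp [mixGen, Matrix.vecMulVec_apply, pairDiff_of_ne hi.1 hi.2]

theorem sum_mixGen [NeZero d] :
    ∑ p : Fin d × Fin d, mixGen p.1 p.2 = (2 * d : ℝ) • (flatMatrix d - 1) := by
  have hd : (d : ℝ) ≠ 0 := NeZero.ne _
  ext a b
  obtain rfl | hab := eq_or_ne a b
  · simp only [mixGen, pairDiff, Matrix.sum_apply, Matrix.neg_apply, Matrix.vecMulVec_apply,
      Pi.sub_apply, Pi.single_apply, mul_sub, mul_ite, mul_one, mul_zero, neg_sub,
      Finset.sum_sub_distrib, Fintype.sum_prod_type, Finset.sum_ite_eq, Finset.mem_univ,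
      ↓reduceIte, Finset.sum_const, Finset.card_univ, Fintype.card_fin, nsmul_eq_mul,
      Finset.sum_ite_irrel, Finset.sum_boole, Finset.filter_const, flatMatrix, one_div,
      Matrix.smul_apply, Matrix.sub_apply, Matrix.of_apply, Matrix.one_apply_eq, smul_eq_mul,
      ne_eq, hd, not_false_eq_true, mul_inv_cancel_right₀]
    ring
  · simp [mixGen, pairDiff, Matrix.sum_apply, Fintype.sum_prod_type, Matrix.vecMulVec_apply,
      Pi.single_apply, flatMatrix, mul_sub, Finset.sum_sub_distrib, hd, hab, one_add_one_eq_two]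

noncomputable def mixSweep (d : ℕ) (t : ℝ) : Matrix (Fin d) (Fin d) ℝ :=
  ((Finset.univ : Finset (Fin d × Fin d)).toList.map fun p => 1 + t • mixGen p.1 p.2).prod

theorem mixSweep_mem_elementaryProducts {t : ℝ} (ht0 : 0 ≤ t) (ht1 : t ≤ 1) :
    mixSweep d t ∈ elementaryProducts d := by
  refine list_prod_mem fun E hE => Submonoid.subset_closure ?_
  obtain ⟨p, -, rfl⟩ := List.mem_map.mp hE
  exact elementary_one_add_smul_mixGen p.1 p.2 ht0 ht1

theorem hasDerivAt_mixSweep [NeZero d] :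
    HasDerivAt (mixSweep d) ((2 * d : ℝ) • (flatMatrix d - 1)) 0 := by
  have h := hasDerivAt_list_prod_one_add_smul (𝕜 := ℝ)
    ((Finset.univ : Finset (Fin d × Fin d)).toList.map fun p => mixGen p.1 p.2)
  simp only [List.map_map, Function.comp_def, Finset.sum_map_toList, sum_mixGen] at h
  exact h

theorem flatMatrix_mul_self [NeZero d] : flatMatrix d * flatMatrix d = flatMatrix d := by
  have hd : (d : ℝ) ≠ 0 := NeZero.ne _
  ext a b
  simp [flatMatrix, Matrix.mul_apply, hd]

noncomputable def ray (d : ℕ) (x : ℝ) : Matrix (Fin d) (Fin d) ℝ :=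
  (1 - x) • (1 : Matrix (Fin d) (Fin d) ℝ) + x • flatMatrix d

theorem ray_eq_one_add_smul (x : ℝ) : ray d x = 1 + x • (flatMatrix d - 1) := by
  unfold ray; module

theorem ray_mul [NeZero d] (x y : ℝ) : ray d x * ray d y = ray d (1 - (1 - x) * (1 - y)) := by
  simp only [ray, add_mul, mul_add, smul_mul_assoc, Matrix.mul_smul, one_mul, mul_one,
    flatMatrix_mul_self, smul_smul]
  match_scalars <;> ring

theorem ray_pow [NeZero d] (x : ℝ) (n : ℕ) : ray d x ^ n = ray d (1 - (1 - x) ^ n) := by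
  induction n with
  | zero => simp [ray]
  | succ n ih => rw [pow_succ, ih, ray_mul, pow_succ, sub_sub_cancel]

theorem bistochastic_ray [NeZero d] {x : ℝ} (hx0 : 0 ≤ x) (hx1 : x ≤ 1) :
    Bistochastic (ray d x) := by
  have hd : (d : ℝ) ≠ 0 := NeZero.ne _
  refine ⟨fun a b => ?_, fun a => ?_, fun b => ?_⟩
  · simp only [ray, flatMatrix, Matrix.add_apply, Matrix.smul_apply, Matrix.one_apply,
      Matrix.of_apply, smul_eq_mul]
    have : 0 ≤ 1 - x := by linarith
    split_ifs <;> positivity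
  all_goals
    simp [ray, flatMatrix, Matrix.one_apply, Finset.sum_add_distrib, mul_left_comm _ x, hd]

theorem hasDerivAt_ray_const_mul (c : ℝ) :
    HasDerivAt (fun t => ray d (c * t)) (c • (flatMatrix d - 1)) 0 := by
  have h := (((hasDerivAt_id (0 : ℝ)).const_mul c).smul_const (flatMatrix d - 1)).const_add 1
  simp only [ray_eq_one_add_smul, id, mul_one] at h ⊢
  exact h

theorem exists_seq_one_sub_pow_eq {lam : ℝ} (h0 : 0 ≤ lam) (h1 : lam < 1) :
    ∃ w : ℕ → ℝ, (∀ n, 0 ≤ w n ∧ w n ≤ 1) ∧ (w =O[atTop] fun n => (n : ℝ)⁻¹) ∧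
      ∀ n ≠ 0, (1 - w n) ^ n = 1 - lam := by
  set a := Real.log (1 - lam)
  have ha : a ≤ 0 := Real.log_nonpos (by linarith) (by linarith)
  have hexp_le : ∀ n : ℕ, Real.exp ((n : ℝ)⁻¹ * a) ≤ 1 := fun n =>
    Real.exp_le_one_iff.mpr (mul_nonpos_of_nonneg_of_nonpos (inv_nonneg.mpr n.cast_nonneg) ha)
  refine ⟨fun n => 1 - Real.exp ((n : ℝ)⁻¹ * a), fun n => ⟨?_, ?_⟩, ?_, fun n hn => ?_⟩
  · linarith [hexp_le n]
  · linarith [Real.exp_pos ((n : ℝ)⁻¹ * a)]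
  · refine IsBigO.of_bound (-a) (Eventually.of_forall fun n => ?_)
    rw [Real.norm_of_nonneg (by linarith [hexp_le n]),
      Real.norm_of_nonneg (inv_nonneg.mpr n.cast_nonneg)]
    linarith [Real.add_one_le_exp ((n : ℝ)⁻¹ * a)]
  · rw [sub_sub_cancel, ← Real.exp_nat_mul,
      mul_inv_cancel_left₀ (Nat.cast_ne_zero.mpr hn : (n : ℝ) ≠ 0), Real.exp_log (by linarith)]

theorem ray_mem_closure_of_lt_one [NeZero d] {lam : ℝ} (h0 : 0 ≤ lam) (h1 : lam < 1) :
    ray d lam ∈ closure (elementaryProducts d : Set (Matrix (Fin d) (Fin d) ℝ)) := by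
  have hd : (1 : ℝ) ≤ 2 * d := by linarith [(Nat.one_le_cast.mpr NeZero.one_le : (1 : ℝ) ≤ d)]
  obtain ⟨w, hw, hwO, hw_pow⟩ := exists_seq_one_sub_pow_eq h0 h1
  set t : ℕ → ℝ := fun n => (2 * d : ℝ)⁻¹ * w n
  have hwt : ∀ n, 2 * d * t n = w n := fun n => mul_inv_cancel_left₀ (by linarith) (w n)
  have hmix : ∀ n, mixSweep d (t n) ∈ elementaryProducts d := fun n =>
    mixSweep_mem_elementaryProducts (mul_nonneg (by positivity) (hw n).1)
      ((mul_le_of_le_one_left (hw n).1 (inv_le_one_of_one_le₀ hd)).trans (hw n).2)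
  have hlim : Tendsto (fun n => mixSweep d (t n) ^ n) atTop (𝓝 (ray d lam)) := by
    refine tendsto_pow_of_hasDerivAt hasDerivAt_mixSweep (hasDerivAt_ray_const_mul _)
      (by simp [mixSweep, ray]) (fun n => norm_le_one_of_mem_elementaryProducts (hmix n))
      (fun n => ?_) (hwO.const_mul_left _) ?_
    · rw [hwt]
      exact (bistochastic_ray (hw n).1 (hw n).2).norm_le_one
    · filter_upwards [eventually_ne_atTop 0] with n hn
      rw [hwt, ray_pow, hw_pow n hn, sub_sub_cancel]
  exact mem_closure_of_tendsto hlim (Eventually.of_forall fun n => pow_mem (hmix n) n)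

theorem ray_mem_closure [NeZero d] {lam : ℝ} (hlam : lam ∈ Set.Icc (0 : ℝ) 1) :
    ray d lam ∈ closure (elementaryProducts d : Set (Matrix (Fin d) (Fin d) ℝ)) := by
  have hcont : Continuous (ray d) := by unfold ray; fun_prop
  have hIco : ray d '' Set.Ico 0 1 ⊆ closure (elementaryProducts d : Set _) := by
    rintro _ ⟨x, hx, rfl⟩
    exact ray_mem_closure_of_lt_one hx.1 hx.2
  rw [← closure_Ico (zero_ne_one' ℝ)] at hlam
  exact closure_minimal hIco isClosed_closure
    (image_closure_subset_closure_image hcont (Set.mem_image_of_mem (ray d) hlam))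

/-- For every `d ≥ 1` and `λ ∈ [0,1]`, the matrix `C_d(λ) = (1-λ) I_d + λ W_d` on the ray
connecting the identity with the flat matrix is a factorisable bistochastic matrix. -/
theorem ray_identity_flat_factorisable {d : ℕ} (hd : 1 ≤ d)
    (lam : ℝ) (hlam : lam ∈ Set.Icc (0 : ℝ) 1) :
    Factorisable ((1 - lam) • (1 : Matrix (Fin d) (Fin d) ℝ) + lam • flatMatrix d) ∧
    Bistochastic ((1 - lam) • (1 : Matrix (Fin d) (Fin d) ℝ) + lam • flatMatrix d) := by
  have : NeZero d := ⟨by omega⟩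
  exact ⟨factorisable_iff_mem_closure.mpr (ray_mem_closure hlam), bistochastic_ray hlam.1 hlam.2⟩
end

section
/- The 3×3 matrix Q with all diagonal entries equal to 0 and all off-diagonal entries equal to 1/2 is bistochastic but not unistochastic: there is no 3×3 unitary matrix U with |U_{jk}|² = Q_{jk} for all j,k. -/
/-- The `3 × 3` matrix `Q` with zero diagonal and all off-diagonal entries `1/2`. -/
noncomputable def Qmatrix : Matrix (Fin 3) (Fin 3) ℝ :=
  Matrix.of fun j k => if j = k then 0 else 1 / 2

open Matrix

def Unistochastic {n : Type*} [Fintype n] [DecidableEq n] (B : Matrix n n ℝ) : Prop :=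
  ∃ U ∈ unitaryGroup n ℂ, ∀ j k, ‖U j k‖ ^ 2 = B j k

theorem two_mul_norm_le_sum_norm_of_sum_eq_zero {ι E : Type*} [SeminormedAddCommGroup E]
    {s : Finset ι} {z : ι → E} (hz : ∑ j ∈ s, z j = 0) {j₀ : ι} (hj₀ : j₀ ∈ s) :
    2 * ‖z j₀‖ ≤ ∑ j ∈ s, ‖z j‖ := by
  classical
  have hside : z j₀ = -∑ j ∈ s.erase j₀, z j := by
    rw [eq_neg_iff_add_eq_zero, Finset.add_sum_erase s z hj₀, hz]
  have hle : ‖z j₀‖ ≤ ∑ j ∈ s.erase j₀, ‖z j‖ := by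
    rw [hside, norm_neg]
    exact norm_sum_le _ _
  linarith [Finset.add_sum_erase s (fun j => ‖z j‖) hj₀]

section Unitary

variable {n : Type*} [Fintype n] [DecidableEq n]

theorem Matrix.sum_star_mul_eq_zero_of_mem_unitaryGroup {U : Matrix n n ℂ}
    (hU : U ∈ unitaryGroup n ℂ) {k l : n} (hkl : k ≠ l) :
    ∑ j, star (U j k) * U j l = 0 := by
  have h := congr_fun₂ (mem_unitaryGroup_iff'.mp hU) k l
  simpa [mul_apply, one_apply, hkl] using h

theorem Unistochastic.two_mul_sqrt_le_sum_sqrt {B : Matrix n n ℝ} (hB : Unistochastic B)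
    {k l : n} (hkl : k ≠ l) (j₀ : n) :
    2 * √(B j₀ k * B j₀ l) ≤ ∑ j, √(B j k * B j l) := by
  obtain ⟨U, hU, hUB⟩ := hB
  have hsqrt : ∀ j, √(B j k * B j l) = ‖star (U j k) * U j l‖ := fun j => by
    rw [← hUB, ← hUB, ← mul_pow, Real.sqrt_sq (by positivity), norm_mul, norm_star]
  simp only [hsqrt]
  exact two_mul_norm_le_sum_norm_of_sum_eq_zero
    (sum_star_mul_eq_zero_of_mem_unitaryGroup hU hkl) (Finset.mem_univ j₀)

end Unitary

theorem bistochastic_Qmatrix : Bistochastic Qmatrix := by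
  refine ⟨fun j k => ?_, fun j => ?_, fun k => ?_⟩
  · simp only [Qmatrix, of_apply]
    split <;> norm_num
  · fin_cases j <;> simp [Qmatrix, Fin.sum_univ_three] <;> norm_num
  · fin_cases k <;> simp [Qmatrix, Fin.sum_univ_three] <;> norm_num

theorem sum_sqrt_Qmatrix_lt_two_mul_sqrt :
    ∑ j, √(Qmatrix j 0 * Qmatrix j 1) < 2 * √(Qmatrix 2 0 * Qmatrix 2 1) := by
  simp [Qmatrix, Fin.sum_univ_three]
  norm_num

/-- `Q` is bistochastic but not unistochastic: no `3 × 3` unitary `U` satisfies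
`|U j k|² = Q j k` for all `j, k`. -/
theorem Qmatrix_bistochastic_not_unistochastic :
    Bistochastic Qmatrix ∧
    ¬ ∃ U ∈ Matrix.unitaryGroup (Fin 3) ℂ, ∀ j k, ‖U j k‖ ^ 2 = Qmatrix j k := by
  refine ⟨bistochastic_Qmatrix, fun hQ => ?_⟩
  have hpolygon := Unistochastic.two_mul_sqrt_le_sum_sqrt hQ (k := 0) (l := 1) (by decide) 2
  exact hpolygon.not_gt sum_sqrt_Qmatrix_lt_two_mul_sqrt
end

section
/- Let U be a d×d circulant unitary matrix, let B be the bistochastic matrix with entries B_{jk} = |U_{jk}|², and let u_0, …, u_{d−1} be the eigenvalues of U obtained by diagonalizing U with the Fourier matrix, i.e., u_j = Σ_{k=0}^{d−1} a_k exp(2πi kj/d) where a_k is the first row of U. Then the eigenvalues of B are b_k = (1/d) · Σ_{j=0}^{d−1} u_j · conj(u_{j−k}), with the index j−k taken modulo d, for k = 0, …, d−1. -/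
/-- A `d × d` matrix is circulant if its entry at `(i, j)` depends only on `i - j`
modulo `d`. -/
def IsCirculant {d : ℕ} {α : Type*} (M : Matrix (Fin d) (Fin d) α) : Prop :=
  ∃ v : Fin d → α, M = Matrix.circulant v

open Matrix Polynomial Finset ComplexConjugate

theorem Matrix.charpoly_eq_of_mul_eq_mul {n R : Type*} [Fintype n] [DecidableEq n] [CommRing R]
    {F M D : Matrix n n R} (hF : IsUnit F.det) (h : F * M = D * F) :
    M.charpoly = D.charpoly := by
  have hM : M = F⁻¹ * (D * F) := by rw [← h, ← mul_assoc, nonsing_inv_mul _ hF, one_mul]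
  rw [hM, charpoly_mul_comm, mul_assoc, mul_nonsing_inv _ hF, mul_one]

theorem Complex.exp_two_pi_mul_I_mul_div (d k j : ℕ) :
    Complex.exp (2 * Real.pi * Complex.I * k * j / d) =
      Complex.exp (2 * Real.pi * Complex.I / d) ^ (k * j) := by
  rw [← Complex.exp_nat_mul]
  push_cast
  ring_nf

namespace Fin

theorem pow_val_add {d : ℕ} {M : Type*} [Monoid M] {ω : M} (hω : ω ^ d = 1) (x y : Fin d) :
    ω ^ ((x + y : Fin d) : ℕ) = ω ^ (x : ℕ) * ω ^ (y : ℕ) := by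
  rw [Fin.val_add, ← pow_eq_pow_mod _ hω, pow_add]

variable {d : ℕ} [NeZero d]

theorem pow_val_neg {G : Type*} [DivisionMonoid G] {ω : G} (hω : ω ^ d = 1) (x : Fin d) :
    ω ^ ((-x : Fin d) : ℕ) = ω⁻¹ ^ (x : ℕ) := by
  rw [inv_pow]
  exact eq_inv_of_mul_eq_one_left (by rw [← pow_val_add hω, neg_add_cancel, val_zero, pow_zero])

theorem pow_val_sub {G : Type*} [DivisionMonoid G] {ω : G} (hω : ω ^ d = 1) (x y : Fin d) :
    ω ^ ((x - y : Fin d) : ℕ) = ω ^ (x : ℕ) * (ω ^ (y : ℕ))⁻¹ := by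
  rw [sub_eq_add_neg, pow_val_add hω, pow_val_neg hω, inv_pow]

theorem vecMul_circulant_pow_val {R : Type*} [CommRing R] {ω : R} (hω : ω ^ d = 1)
    (w : Fin d → R) :
    (fun k : Fin d => ω ^ (k : ℕ)) ᵥ* circulant w =
      (∑ m, w m * ω ^ (m : ℕ)) • fun k : Fin d => ω ^ (k : ℕ) := by
  ext k
  simp only [vecMul, dotProduct, circulant_apply, Pi.smul_apply, smul_eq_mul, sum_mul]
  rw [← Equiv.sum_comp (Equiv.addRight k)]
  refine sum_congr rfl fun m _ => ?_
  rw [Equiv.coe_addRight, add_sub_cancel_right, pow_val_add hω]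
  ring

section Field

variable {K : Type*} [Field K]

def dft (ζ : K) (a : Fin d → K) (j : Fin d) : K :=
  ∑ m, a m * ζ ^ ((m : ℕ) * j)

theorem dft_comp_neg {ζ : K} (hζ : ζ ^ d = 1) (a : Fin d → K) :
    dft ζ (fun m => a (-m)) = dft ζ⁻¹ a := by
  ext j
  rw [dft, dft, ← Equiv.sum_comp (Equiv.neg (Fin d))]
  refine sum_congr rfl fun m _ => ?_
  rw [Equiv.neg_apply, neg_neg, pow_mul, pow_val_neg hζ, ← pow_mul]

theorem charpoly_circulant {ζ : K} (hζ : IsPrimitiveRoot ζ d) (w : Fin d → K) :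
    (circulant w).charpoly = ∏ j, (X - C (dft ζ w j)) := by
  set F := vandermonde fun j : Fin d => ζ ^ (j : ℕ)
  have hF : IsUnit F.det := by
    refine isUnit_iff_ne_zero.mpr (det_vandermonde_ne_zero_iff.mpr fun i j h => ?_)
    exact Fin.ext (hζ.pow_inj i.isLt j.isLt h)
  have hFw : F * circulant w = diagonal (dft ζ w) * F := by
    ext j k
    have hrow := congrFun (vecMul_circulant_pow_val (ω := ζ ^ (j : ℕ))
      (by rw [pow_right_comm, hζ.pow_eq_one, one_pow]) w) k
    rw [mul_apply_eq_vecMul, diagonal_mul,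
      show F j = fun k : Fin d => (ζ ^ (j : ℕ)) ^ (k : ℕ) from rfl, hrow]
    simp only [dft, Pi.smul_apply, smul_eq_mul, ← pow_mul, mul_comm (j : ℕ)]
  rw [charpoly_eq_of_mul_eq_mul hF hFw, charpoly_diagonal]

theorem sum_pow_mul_inv_pow {ζ : K} (hζ : IsPrimitiveRoot ζ d) (m n : Fin d) :
    ∑ j : Fin d, ζ ^ ((m : ℕ) * j) * (ζ ^ ((n : ℕ) * j))⁻¹ = if m = n then (d : K) else 0 := by
  have hζ0 : ζ ≠ 0 := hζ.ne_zero (NeZero.ne d)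
  set x := ζ ^ (m : ℕ) / ζ ^ (n : ℕ)
  have hx : ∀ j : ℕ, ζ ^ ((m : ℕ) * j) * (ζ ^ ((n : ℕ) * j))⁻¹ = x ^ j := fun j => by
    rw [div_pow, ← pow_mul, ← pow_mul, div_eq_mul_inv]
  simp only [hx]
  rw [sum_univ_eq_sum_range (x ^ ·)]
  split_ifs with hmn
  · simp [x, hmn, div_self (pow_ne_zero _ hζ0)]
  · have hx1 : x ≠ 1 := fun h => hmn (Fin.ext (hζ.pow_inj m.isLt n.isLt
      (div_eq_one_iff_eq (pow_ne_zero _ hζ0) |>.mp h)))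
    have hxd : x ^ d = 1 := by
      rw [div_pow, pow_right_comm, hζ.pow_eq_one, one_pow, pow_right_comm, hζ.pow_eq_one,
        one_pow, div_one]
    rw [geom_sum_eq hx1, hxd, sub_self, zero_div]

end Field

theorem sum_dft_mul_conj_dft_sub {ζ : ℂ} (hζ : IsPrimitiveRoot ζ d) (a : Fin d → ℂ) (k : Fin d) :
    ∑ j, dft ζ a j * conj (dft ζ a (j - k)) = d * dft ζ (fun m => a m * conj (a m)) k := by
  have hconj_shift : ∀ (n : ℕ) (j : Fin d),
      conj (ζ ^ (n * (j - k : Fin d))) = ζ ^ (n * k) * (ζ ^ (n * j))⁻¹ := fun n j => by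
    rw [← Complex.inv_eq_conj (by rw [norm_pow, hζ.norm'_eq_one (NeZero.ne d), one_pow]),
      pow_mul, pow_val_sub (by rw [pow_right_comm, hζ.pow_eq_one, one_pow]), mul_inv, inv_inv,
      ← pow_mul, ← pow_mul, mul_comm]
  calc ∑ j, dft ζ a j * conj (dft ζ a (j - k))
      = ∑ j : Fin d, ∑ m, ∑ n, a m * conj (a n) * ζ ^ ((n : ℕ) * k) *
          (ζ ^ ((m : ℕ) * j) * (ζ ^ ((n : ℕ) * j))⁻¹) := by
        refine sum_congr rfl fun j _ => ?_
        simp only [dft, map_sum, map_mul, hconj_shift, sum_mul_sum]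
        refine sum_congr rfl fun m _ => sum_congr rfl fun n _ => ?_
        ring
    _ = ∑ m, ∑ n, a m * conj (a n) * ζ ^ ((n : ℕ) * k) *
          ∑ j : Fin d, ζ ^ ((m : ℕ) * j) * (ζ ^ ((n : ℕ) * j))⁻¹ := by
        simp only [mul_sum]
        rw [sum_comm]
        exact sum_congr rfl fun m _ => sum_comm
    _ = d * dft ζ (fun m => a m * conj (a m)) k := by
        simp only [sum_pow_mul_inv_pow hζ, mul_ite, mul_zero, sum_ite_eq, mem_univ, if_true,
          dft, mul_sum]
        exact sum_congr rfl fun m _ => by ring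

end Fin

theorem eigenvalues_doubly_circulant_general {d : ℕ} (hd : 0 < d)
    (U : Matrix (Fin d) (Fin d) ℂ)
    (hUc : IsCirculant U)
    (B : Matrix (Fin d) (Fin d) ℝ) (hB : ∀ j k, B j k = ‖U j k‖ ^ 2)
    (u : Fin d → ℂ)
    (hu : ∀ j : Fin d, u j = ∑ k : Fin d,
      U ⟨0, hd⟩ k * Complex.exp (2 * Real.pi * Complex.I * (k : ℕ) * (j : ℕ) / d)) :
    (B.map (fun x : ℝ => (x : ℂ))).charpoly =
      ∏ k : Fin d, (Polynomial.X - Polynomial.C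
        ((1 / (d : ℂ)) * ∑ j : Fin d, u j * (starRingEnd ℂ) (u (j - k)))) := by
  have : NeZero d := ⟨hd.ne'⟩
  obtain ⟨v, rfl⟩ := hUc
  have hζ := Complex.isPrimitiveRoot_exp d hd.ne'
  set ζ := Complex.exp (2 * Real.pi * Complex.I / d) with hζ_def
  have hu_dft : u = Fin.dft ζ fun m => v (-m) := by
    ext j
    rw [hu, Fin.mk_zero' d]
    simp only [Fin.dft, circulant_apply, zero_sub, Complex.exp_two_pi_mul_I_mul_div, ← hζ_def]
  have hB_circ : B.map (fun x : ℝ => (x : ℂ)) = circulant fun m => v m * conj (v m) := by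
    ext j k
    simp only [map_apply, hB, circulant_apply, Complex.mul_conj, Complex.normSq_eq_norm_sq]
  rw [hB_circ, Fin.charpoly_circulant hζ.inv, hu_dft]
  refine prod_congr rfl fun k _ => ?_
  rw [Fin.sum_dft_mul_conj_dft_sub hζ, one_div, inv_mul_cancel_left₀ (Nat.cast_ne_zero.mpr hd.ne'),
    ← Fin.dft_comp_neg hζ.pow_eq_one]

/-- Let `U` be a `d × d` circulant unitary matrix, `B` the bistochastic matrix with
`B j k = |U j k|²`, and let `u j = ∑ k, a k * exp(2πi k j / d)` where `a` is the first row
of `U` (the eigenvalues of `U` obtained from the Fourier diagonalization). Then the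
eigenvalues of `B` are exactly `b k = (1/d) ∑ j, u j * conj (u (j - k))` for `k : Fin d`,
i.e. the characteristic polynomial of `B` (over `ℂ`) is `∏ k, (X - b k)`. -/
theorem eigenvalues_doubly_circulant {d : ℕ} (hd : 0 < d)
    (U : Matrix (Fin d) (Fin d) ℂ) (hU : U ∈ Matrix.unitaryGroup (Fin d) ℂ)
    (hUc : IsCirculant U)
    (B : Matrix (Fin d) (Fin d) ℝ) (hB : ∀ j k, B j k = ‖U j k‖ ^ 2)
    (u : Fin d → ℂ)
    (hu : ∀ j : Fin d, u j = ∑ k : Fin d,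
      U ⟨0, hd⟩ k * Complex.exp (2 * Real.pi * Complex.I * (k : ℕ) * (j : ℕ) / d)) :
    (B.map (fun x : ℝ => (x : ℂ))).charpoly =
      ∏ k : Fin d, (Polynomial.X - Polynomial.C
        ((1 / (d : ℂ)) * ∑ j : Fin d, u j * (starRingEnd ℂ) (u (j - k)))) :=
  eigenvalues_doubly_circulant_general hd U hUc B hB u hu
end
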